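/- If μ ≥ η̃ > 0 and ν > 9η̃μ/(4μ−η̃), then there exists q̃₀ ∈ (3/4, 1) such that for all q̃ ∈ (q̃₀, 1): B(v₋(q̃)) is negative definite, A(v₋(q̃)) is positive definite, and both eigenvalues of B(v₋(q̃))⁻¹·A(v₋(q̃)) are real and negative, i.e., the upstream state ψ₋(q̃) is an attractor of the profile ODE. (Lemma 2(i).) -/

import Mathlib

open Real Matrix Filter Topology Set

noncomputable section

/-- The state space condition `ψ⁰ > |ψ¹|`. -/
def StateSpace (ψ : Fin 2 → ℝ) : Prop := |ψ 1| < ψ 0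

/-- Temperature variable `θ(ψ) = ((ψ⁰)² − (ψ¹)²)^(−1/2)`. -/
def θf (ψ : Fin 2 → ℝ) : ℝ := (Real.sqrt ((ψ 0) ^ 2 - (ψ 1) ^ 2))⁻¹

/-- `u(ψ) = θ(ψ) ψ⁰`. -/
def uf (ψ : Fin 2 → ℝ) : ℝ := θf ψ * ψ 0

/-- `v(ψ) = θ(ψ) ψ¹`. -/
def vf (ψ : Fin 2 → ℝ) : ℝ := θf ψ * ψ 1

/-- Ideal stress component `T⁰¹`. -/
def T01 (ψ : Fin 2 → ℝ) : ℝ := (4 / 3) * (θf ψ) ^ 4 * uf ψ * vf ψ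

/-- Ideal stress component `T¹¹`. -/
def T11 (ψ : Fin 2 → ℝ) : ℝ := (θf ψ) ^ 4 * ((4 / 3) * (vf ψ) ^ 2 + 1 / 3)

/-- `u = √(1+v²)` as a function of the velocity `v`. -/
def uu (v : ℝ) : ℝ := Real.sqrt (1 + v ^ 2)

/-- Viscosity matrix `B̃_visc(v)`. -/
def Bvisc (v : ℝ) : Matrix (Fin 2) (Fin 2) ℝ :=
  !![(uu v) ^ 2 * v ^ 2, -((uu v) ^ 3 * v); -((uu v) ^ 3 * v), (uu v) ^ 4]

/-- Thermal regulator matrix `B_ther(v)`. -/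
def Bther (v : ℝ) : Matrix (Fin 2) (Fin 2) ℝ :=
  !![16 * (uu v) ^ 2 * v ^ 2, -(4 * uu v * v * (4 * v ^ 2 + 1));
     -(4 * uu v * v * (4 * v ^ 2 + 1)), (4 * v ^ 2 + 1) ^ 2]

/-- Velocity regulator matrix `B_velo(v)`. -/
def Bvelo (v : ℝ) : Matrix (Fin 2) (Fin 2) ℝ :=
  !![((uu v) ^ 2 + v ^ 2) ^ 2, -(2 * ((uu v) ^ 2 + v ^ 2) * uu v * v);
     -(2 * ((uu v) ^ 2 + v ^ 2) * uu v * v), 4 * (uu v) ^ 2 * v ^ 2]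

/-- The full dissipation matrix `B(v) = η̃ B̃_visc − μ B_ther − ν B_velo`. -/
def Bmat (η μ ν v : ℝ) : Matrix (Fin 2) (Fin 2) ℝ :=
  η • Bvisc v - μ • Bther v - ν • Bvelo v

/-- The (rescaled) flux Jacobian `A(v)`. -/
def Amat (v : ℝ) : Matrix (Fin 2) (Fin 2) ℝ :=
  !![v * (6 * (uu v) ^ 2 - 1), -(uu v * (6 * v ^ 2 + 1));
     -(uu v * (6 * v ^ 2 + 1)), v * (6 * v ^ 2 + 3)]

/-- Upstream velocity `v₋(q̃)`. -/
def vminus (q : ℝ) : ℝ :=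
  Real.sqrt (((2 * q - 1) + Real.sqrt (q * (4 * q - 3))) / (4 * (1 - q)))

/-- Downstream velocity `v₊(q̃)`. -/
def vplus (q : ℝ) : ℝ :=
  Real.sqrt (((2 * q - 1) - Real.sqrt (q * (4 * q - 3))) / (4 * (1 - q)))

/-- The state `ψ` with velocity `v` on the Hugoniot curve `T¹¹ = 1`. -/
def psiOf (v : ℝ) : Fin 2 → ℝ :=
  ((4 / 3) * v ^ 2 + 1 / 3) ^ ((1 : ℝ) / 4) • ![Real.sqrt (1 + v ^ 2), v]

/-- Upstream state `ψ₋(q̃)`. -/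
def psiMinus (q : ℝ) : Fin 2 → ℝ := psiOf (vminus q)

/-- Downstream state `ψ₊(q̃)`. -/
def psiPlus (q : ℝ) : Fin 2 → ℝ := psiOf (vplus q)

/-- `ψ : ℝ → Ψ` is a C¹ solution of the profile ODE
`B(v(ψ))·ψ' = (T⁰¹(ψ) − q̃^(−1/2), T¹¹(ψ) − 1)`. -/
def ProfileSolution (η μ ν q : ℝ) (ψ : ℝ → Fin 2 → ℝ) : Prop :=
  ContDiff ℝ 1 ψ ∧ (∀ t, StateSpace (ψ t)) ∧
  ∀ t, (Bmat η μ ν (vf (ψ t))).mulVec (deriv ψ t) =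
    ![T01 (ψ t) - (Real.sqrt q)⁻¹, T11 (ψ t) - 1]

end

/-
If `A x = z • B x` for a nonzero complex vector `x`, then `z = xᴴAx / xᴴBx` is the quotient of a
positive and a negative real number; so `B⁻¹A` has only real negative eigenvalues as soon as `-B`
and `A` are positive definite. For the symmetric 2×2 matrices at hand, definiteness is read off a
diagonal entry and the determinant. With `s = v²` one finds `det A = 2s - 1` and
`det B = μν(2s - 1)² - ην(1 + s)² - 9ημ s(1 + s)`, whose leading coefficient `4μν - ην - 9ημ`
is positive exactly when `ν > 9ημ/(4μ - η)`. Since `v₋(q̃)² ≥ 1/(8(1 - q̃)) → ∞` as `q̃ → 1`,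
both determinants are positive for `q̃` close to `1`.
-/

open Polynomial
open scoped ComplexOrder

section Complexification

variable {n : Type*} [Fintype n]

theorem Matrix.IsSymm.star_dotProduct_map_algebraMap_mulVec {A : Matrix n n ℝ} (hA : A.IsSymm)
    (x : n → ℂ) :
    star x ⬝ᵥ (A.map (algebraMap ℝ ℂ) *ᵥ x) =
      algebraMap ℝ ℂ ((fun i ↦ (x i).re) ⬝ᵥ (A *ᵥ fun i ↦ (x i).re) +
        (fun i ↦ (x i).im) ⬝ᵥ (A *ᵥ fun i ↦ (x i).im)) := by
  have hswap : ∑ i, ∑ j, (x i).im * (A i j * (x j).re) =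
      ∑ i, ∑ j, (x i).re * (A i j * (x j).im) := by
    rw [Finset.sum_comm]
    simp only [hA.apply, mul_comm, mul_left_comm]
  apply Complex.ext
  · simp [dotProduct, mulVec, Complex.re_sum, Finset.mul_sum, ← Finset.sum_add_distrib]
  · simp [dotProduct, mulVec, Complex.im_sum, Finset.mul_sum, Finset.sum_add_distrib, hswap]

theorem Matrix.PosDef.map_algebraMap {A : Matrix n n ℝ} (hA : A.PosDef) :
    (A.map (algebraMap ℝ ℂ)).PosDef := by
  refine .of_dotProduct_mulVec_pos (hA.isHermitian.map _ fun _ ↦ by simp) fun x hx ↦ ?_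
  rw [(isHermitian_iff_isSymm.mp hA.isHermitian).star_dotProduct_map_algebraMap_mulVec,
    Complex.coe_algebraMap, Complex.zero_lt_real]
  have hx' : (fun i ↦ (x i).re) ≠ 0 ∨ (fun i ↦ (x i).im) ≠ 0 := by
    contrapose! hx
    funext i
    exact Complex.ext (congrFun hx.1 i) (congrFun hx.2 i)
  rcases hx' with h | h
  · exact add_pos_of_pos_of_nonneg (hA.dotProduct_mulVec_pos h)
      (hA.posSemidef.dotProduct_mulVec_nonneg _)
  · exact add_pos_of_nonneg_of_pos (hA.posSemidef.dotProduct_mulVec_nonneg _)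
      (hA.dotProduct_mulVec_pos h)

theorem Matrix.exists_mulVec_eq_smul_of_aeval_charpoly_eq_zero [DecidableEq n]
    (M : Matrix n n ℝ) {z : ℂ} (hz : aeval z M.charpoly = 0) :
    ∃ x : n → ℂ, x ≠ 0 ∧ M.map (algebraMap ℝ ℂ) *ᵥ x = z • x := by
  rw [aeval_def, eval₂_eq_eval_map, ← charpoly_map, eval_charpoly] at hz
  obtain ⟨x, hx, hMx⟩ := exists_mulVec_eq_zero_iff.mpr hz
  refine ⟨x, hx, ?_⟩
  rw [sub_mulVec, sub_eq_zero] at hMx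
  simpa using hMx.symm

theorem Matrix.im_eq_zero_and_re_neg_of_aeval_charpoly_inv_mul [DecidableEq n]
    {A B : Matrix n n ℝ} (hB : (-B).PosDef) (hA : A.PosDef) {z : ℂ}
    (hz : aeval z (B⁻¹ * A).charpoly = 0) :
    z.im = 0 ∧ z.re < 0 := by
  obtain ⟨x, hx, hBAx⟩ := (B⁻¹ * A).exists_mulVec_eq_smul_of_aeval_charpoly_eq_zero hz
  have hBunit : IsUnit B := by simpa using hB.isUnit.neg
  have hAx : A.map (algebraMap ℝ ℂ) *ᵥ x = z • (B.map (algebraMap ℝ ℂ) *ᵥ x) := by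
    have hB1 : B.map (algebraMap ℝ ℂ) * B⁻¹.map (algebraMap ℝ ℂ) = 1 := by
      rw [← Matrix.map_mul, mul_nonsing_inv _ ((isUnit_iff_isUnit_det B).mp hBunit)]
      simp
    rw [← mulVec_smul, ← hBAx, Matrix.map_mul, mulVec_mulVec, ← Matrix.mul_assoc, hB1,
      Matrix.one_mul]
  have hpA := hA.map_algebraMap.dotProduct_mulVec_pos hx
  have hpB := hB.map_algebraMap.dotProduct_mulVec_pos hx
  rw [hAx, dotProduct_smul, smul_eq_mul, Complex.pos_iff, Complex.mul_re, Complex.mul_im] at hpA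
  rw [Matrix.map_neg _ (map_neg _), neg_mulVec, dotProduct_neg, neg_pos, Complex.neg_iff] at hpB
  simp only [hpB.2, mul_zero, sub_zero, zero_add] at hpA
  exact ⟨(mul_eq_zero.mp hpA.2.symm).resolve_right hpB.1.ne,
    neg_of_mul_pos_left hpA.1 hpB.1.le⟩

end Complexification

theorem Matrix.posDef_of_fin_two {𝕜 : Type*} [Field 𝕜] [LinearOrder 𝕜] [IsStrictOrderedRing 𝕜]
    [StarRing 𝕜] [TrivialStar 𝕜] {a b d : 𝕜} (ha : 0 < a) (hdet : 0 < !![a, b; b, d].det) :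
    !![a, b; b, d].PosDef := by
  rw [det_fin_two_of] at hdet
  refine .of_dotProduct_mulVec_pos (isHermitian_iff_isSymm.mpr <| IsSymm.ext fun i j ↦ ?_)
    fun x hx ↦ ?_
  · fin_cases i <;> fin_cases j <;> rfl
  · have hx' : x 0 ≠ 0 ∨ x 1 ≠ 0 := by
      contrapose! hx
      ext i
      fin_cases i <;> simp [hx]
    simp only [star_trivial, dotProduct, mulVec, Fin.sum_univ_two, of_apply, cons_val',
      cons_val_zero, cons_val_one, empty_val', cons_val_fin_one]
    have hscaled : a * (x 0 * (a * x 0 + b * x 1) + x 1 * (b * x 0 + d * x 1)) =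
        (a * x 0 + b * x 1) ^ 2 + (a * d - b * b) * x 1 ^ 2 := by ring
    refine pos_of_mul_pos_right (hscaled ▸ ?_) ha.le
    rcases eq_or_ne (x 1) 0 with h1 | h1
    · have h0 : x 0 ≠ 0 := hx'.resolve_right (not_not.mpr h1)
      rw [h1, mul_zero, add_zero, zero_pow two_ne_zero, mul_zero, add_zero]
      exact pow_two_pos_of_ne_zero (mul_ne_zero ha.ne' h0)
    · exact add_pos_of_nonneg_of_pos (sq_nonneg _)
        (mul_pos hdet (pow_two_pos_of_ne_zero h1))

theorem uu_sq (v : ℝ) : uu v ^ 2 = 1 + v ^ 2 := Real.sq_sqrt (by positivity)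

theorem det_Amat (v : ℝ) : (Amat v).det = 2 * v ^ 2 - 1 := by
  rw [Amat, det_fin_two_of]
  linear_combination (6 * v ^ 2 * (6 * v ^ 2 + 3) - (6 * v ^ 2 + 1) ^ 2) * uu_sq v

theorem Amat_posDef {v : ℝ} (hv : 0 < v) (hv2 : 1 < 2 * v ^ 2) : (Amat v).PosDef :=
  posDef_of_fin_two (mul_pos hv (by linarith [uu_sq v]))
    (show 0 < (Amat v).det by rw [det_Amat]; linarith)

theorem neg_Bmat_eq (η μ ν v : ℝ) : -Bmat η μ ν v =
    !![(16 * μ - η) * (1 + v ^ 2) * v ^ 2 + ν * (1 + 2 * v ^ 2) ^ 2,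
        uu v * v * (η * (1 + v ^ 2) - 4 * μ * (4 * v ^ 2 + 1) - 2 * ν * (1 + 2 * v ^ 2));
      uu v * v * (η * (1 + v ^ 2) - 4 * μ * (4 * v ^ 2 + 1) - 2 * ν * (1 + 2 * v ^ 2)),
        μ * (4 * v ^ 2 + 1) ^ 2 + 4 * ν * (1 + v ^ 2) * v ^ 2 - η * (1 + v ^ 2) ^ 2] := by
  have h3 : uu v ^ 3 = uu v * (1 + v ^ 2) := by rw [pow_succ', uu_sq]
  have h4 : uu v ^ 4 = (1 + v ^ 2) ^ 2 := by rw [← uu_sq]; ring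
  ext i j
  fin_cases i <;> fin_cases j <;> simp [Bmat, Bvisc, Bther, Bvelo, uu_sq, h3, h4] <;> ring

theorem det_neg_Bmat (η μ ν v : ℝ) : (-Bmat η μ ν v).det =
    μ * ν * (2 * v ^ 2 - 1) ^ 2 - η * ν * (1 + v ^ 2) ^ 2 - 9 * η * μ * v ^ 2 * (1 + v ^ 2) := by
  rw [neg_Bmat_eq, det_fin_two_of]
  linear_combination
    -(v ^ 2 * (η * (1 + v ^ 2) - 4 * μ * (4 * v ^ 2 + 1) - 2 * ν * (1 + 2 * v ^ 2)) ^ 2) * uu_sq v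

theorem neg_Bmat_posDef {η μ ν v : ℝ} (hη : 0 < η) (hμ : η ≤ μ) (hν : 0 < ν)
    (hv : 4 * μ * ν + 2 * η * ν + 9 * η * μ < v ^ 2 * (4 * μ * ν - η * ν - 9 * η * μ)) :
    (-Bmat η μ ν v).PosDef := by
  have hdet := det_neg_Bmat η μ ν v
  rw [neg_Bmat_eq] at hdet ⊢
  refine posDef_of_fin_two (add_pos_of_nonneg_of_pos ?_ (by positivity)) ?_
  · exact mul_nonneg (mul_nonneg (by linarith) (by positivity)) (by positivity)
  have hK : 0 < 4 * μ * ν + 2 * η * ν + 9 * η * μ := by nlinarith [mul_pos hη hν]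
  have hs : 0 < v ^ 2 := (sq_nonneg v).lt_of_ne fun h ↦ by rw [← h, zero_mul] at hv; linarith
  have hquad : μ * ν * (2 * v ^ 2 - 1) ^ 2 - η * ν * (1 + v ^ 2) ^ 2
      - 9 * η * μ * v ^ 2 * (1 + v ^ 2) =
      v ^ 2 * (v ^ 2 * (4 * μ * ν - η * ν - 9 * η * μ) - (4 * μ * ν + 2 * η * ν + 9 * η * μ))
        + (μ - η) * ν := by ring
  rw [hdet, hquad]
  exact add_pos_of_pos_of_nonneg (mul_pos hs (sub_pos.mpr hv))
    (mul_nonneg (sub_nonneg.mpr hμ) hν.le)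

theorem inv_le_vminus_sq {q : ℝ} (hq : 3 / 4 ≤ q) (hq1 : q < 1) :
    (8 * (1 - q))⁻¹ ≤ vminus q ^ 2 := by
  have hden : 0 < 4 * (1 - q) := by linarith
  have hsqrt := Real.sqrt_nonneg (q * (4 * q - 3))
  have hfrac : (8 * (1 - q))⁻¹ ≤ (2 * q - 1 + Real.sqrt (q * (4 * q - 3))) / (4 * (1 - q)) := by
    calc (8 * (1 - q))⁻¹ = (1 / 2) / (4 * (1 - q)) := by field_simp; ring
      _ ≤ _ := div_le_div_of_nonneg_right (by linarith) hden.le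
  rwa [vminus, Real.sq_sqrt ((inv_pos.mpr (by linarith)).le.trans hfrac)]

theorem tendsto_vminus_sq : Tendsto (fun q ↦ vminus q ^ 2) (𝓝[<] 1) atTop := by
  have hgap : Tendsto (fun q : ℝ ↦ 8 * (1 - q)) (𝓝[<] 1) (𝓝[>] 0) := by
    refine tendsto_nhdsWithin_of_tendsto_nhds_of_eventually_within _ ?_ ?_
    · exact ((continuous_const.mul (continuous_const.sub continuous_id)).tendsto' 1 0
        (by norm_num)).mono_left nhdsWithin_le_nhds
    · filter_upwards [self_mem_nhdsWithin] with q hq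
      simpa using hq
  refine tendsto_atTop_mono' _ ?_ (tendsto_inv_nhdsGT_zero.comp hgap)
  filter_upwards [Ioo_mem_nhdsLT (by norm_num : (3 / 4 : ℝ) < 1)] with q hq
  exact inv_le_vminus_sq hq.1.le hq.2

theorem exists_forall_lt_vminus_sq (M : ℝ) :
    ∃ q₀ ∈ Ioo (3 / 4 : ℝ) 1, ∀ q ∈ Ioo q₀ 1, M < vminus q ^ 2 := by
  obtain ⟨q₀, ⟨hq₀, hq₀1⟩, hsub⟩ :=
    (mem_nhdsLT_iff_exists_mem_Ico_Ioo_subset (by norm_num : (7 / 8 : ℝ) < 1)).mp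
      (tendsto_vminus_sq.eventually_gt_atTop M)
  exact ⟨q₀, ⟨by linarith, hq₀1⟩, fun q hq ↦ hsub hq⟩

/-- Lemma 2(i): in the strictly causal case, for all `q̃` close enough to `1`,
`B(v₋(q̃))` is negative definite, `A(v₋(q̃))` is positive definite, and all
eigenvalues of `B(v₋)⁻¹ A(v₋)` are real and negative: `ψ₋(q̃)` is an attractor. -/
theorem strictly_causal_upstream_is_attractor (η μ ν : ℝ) (hη : 0 < η) (hμ : η ≤ μ)
    (hν : 9 * η * μ / (4 * μ - η) < ν) :
    ∃ q₀ ∈ Set.Ioo (3 / 4 : ℝ) 1, ∀ q ∈ Set.Ioo q₀ 1,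
      (-(Bmat η μ ν (vminus q))).PosDef ∧ (Amat (vminus q)).PosDef ∧
      ∀ z : ℂ,
        Polynomial.aeval z ((Bmat η μ ν (vminus q))⁻¹ * Amat (vminus q)).charpoly = 0 →
          z.im = 0 ∧ z.re < 0 := by
  have hdenom : 0 < 4 * μ - η := by linarith
  have hν0 : 0 < ν := (div_pos (by nlinarith) hdenom).trans hν
  have hlead : 0 < 4 * μ * ν - η * ν - 9 * η * μ := by
    have := (div_lt_iff₀ hdenom).mp hν
    linarith
  obtain ⟨q₀, hq₀, hlarge⟩ := exists_forall_lt_vminus_sq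
    (max 1 ((4 * μ * ν + 2 * η * ν + 9 * η * μ) / (4 * μ * ν - η * ν - 9 * η * μ)))
  refine ⟨q₀, hq₀, fun q hq ↦ ?_⟩
  obtain ⟨hv1, hvK⟩ := max_lt_iff.mp (hlarge q hq)
  have hv : 0 < vminus q := lt_of_pow_lt_pow_left₀ 2 (Real.sqrt_nonneg _) (by linarith)
  have hB := neg_Bmat_posDef hη hμ hν0 ((div_lt_iff₀ hlead).mp hvK)
  have hA := Amat_posDef hv (by linarith)
  exact ⟨hB, hA, fun z hz ↦ im_eq_zero_and_re_neg_of_aeval_charpoly_inv_mul hB hA hz⟩
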